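/- arXiv:2008.13378 — 5 statements merged into one kernel-verified Lean document; each statement's English description precedes it below -/
import Mathlib

section
/- Let R = 𝔬/𝔭^ℓ with unit group action of 𝔬^× on R by multiplication, and let 𝔬^×_r = {1 + aπ^{r+1} | a ∈ 𝔬} for r ≥ 0 (with 𝔬^×_{-∞} = 𝔬^×). For 0 ≤ s ≤ r ≤ ℓ-1 and characters χ, χ' ∈ R̂ with v̂(χ) = v̂(χ') = r, the following are equivalent: (i) χ and χ' lie in the same 𝔬^×_{r-s}-orbit under the contragredient action; (ii) χ = χ' on the subgroup 𝔭^s/𝔭^ℓ; (iii) v̂(χ·χ'^{-1}) ≤ s-1 (where v̂(1) = -∞). -/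
/-!
A character `χ` of `R = 𝔬/𝔭^ℓ` of level `r` is trivial on `𝔭^{r+1}R`, and `χ(z · 𝔭^k R) = 1` forces
`z ∈ 𝔭^{r-k+1}` for `k ≤ r`: otherwise `z` divides `π^{r-k}`, so `z · 𝔭^k R ⊇ 𝔭^r R`, on which `χ` is
nontrivial. For `k = 0` this says that `(a, b) ↦ χ(ab)` is a perfect pairing on `R/𝔭^{r+1}`, so by
counting every character trivial on `𝔭^{r+1}R`, in particular `χ'`, is `χ(a ·)`, with `a` a unit
since `χ'` has level `r`. Finally `χ(a b) = χ(b) χ((a - 1) b)`, so `χ(a ·) = χ` on `𝔭^s R` exactly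
when `a - 1 ∈ 𝔭^{r-s+1}`, which is the case `k = s`.
-/

/-- The image in `R = 𝔬/𝔭^ℓ` of the ideal `𝔭^r`. -/
def idealImage (O : Type) [CommRing O] (π : O) (ℓ r : ℕ) :
    Ideal (O ⧸ (Ideal.span {π} ^ ℓ)) :=
  Ideal.map (Ideal.Quotient.mk (Ideal.span {π} ^ ℓ)) (Ideal.span {π} ^ r)

/-- The set of characters `χ` of `R = 𝔬/𝔭^ℓ` with dual valuation `v̂(χ) = r`. -/
def dualLevel (O : Type) [CommRing O] (π : O) (ℓ r : ℕ) :
    Set (AddChar (O ⧸ (Ideal.span {π} ^ ℓ)) ℂ) :=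
  {χ | (∀ a ∈ idealImage O π ℓ (r + 1), χ a = 1) ∧ ∃ a ∈ idealImage O π ℓ r, χ a ≠ 1}

namespace AddChar

lemma eq_of_sub_eq_one {A M : Type*} [AddGroup A] [Monoid M] (η : AddChar A M) {u v : A}
    (h : η (u - v) = 1) : η u = η v := by
  rw [← sub_add_cancel u v, map_add_eq_mul, h, one_mul]

lemma exists_eq_compAddMonoidHom {A B M : Type*} [AddGroup A] [AddGroup B] [Monoid M]
    {f : A →+ B} (hf : Function.Surjective f) {η : AddChar A M}
    (hη : ∀ a, f a = 0 → η a = 1) : ∃ ψ : AddChar B M, η = ψ.compAddMonoidHom f := by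
  have hfactor : ∀ u v, f u = f v → η u = η v := fun u v huv =>
    η.eq_of_sub_eq_one (hη _ (by rw [map_sub, huv, sub_self]))
  let g := Function.surjInv hf
  have hg : ∀ b, f (g b) = b := Function.surjInv_eq hf
  refine ⟨⟨fun b => η (g b), ?_, fun b b' => ?_⟩, ?_⟩
  · rw [hfactor _ 0 (by rw [hg, map_zero]), map_zero_eq_one]
  · exact (hfactor _ _ (by rw [hg, map_add, hg, hg])).trans (map_add_eq_mul _ _ _)
  · ext a
    exact hfactor _ _ (hg _).symm

lemma exists_eq_mulShift {A : Type*} [CommRing A] [Finite A] {I : Ideal A}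
    {χ η : AddChar A ℂ} (hχ : ∀ a ∈ I, χ a = 1) (hnd : ∀ d, (∀ x, χ (d * x) = 1) → d ∈ I)
    (hη : ∀ a ∈ I, η a = 1) : ∃ a, η = χ.mulShift a := by
  have hmk := Ideal.Quotient.mk_surjective (I := I)
  obtain ⟨ψ, rfl⟩ := exists_eq_compAddMonoidHom (f := (Ideal.Quotient.mk I).toAddMonoidHom) hmk
    fun a ha => hχ a (Ideal.Quotient.eq_zero_iff_mem.mp ha)
  obtain ⟨ψ', rfl⟩ := exists_eq_compAddMonoidHom (f := (Ideal.Quotient.mk I).toAddMonoidHom) hmk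
    fun a ha => hη a (Ideal.Quotient.eq_zero_iff_mem.mp ha)
  -- `ψ` is primitive, so `ψ.mulShift` is injective, hence bijective: `A ⧸ I` and its dual have the
  -- same cardinality.
  have hprim : ψ.IsPrimitive := by
    intro b hb h
    obtain ⟨d, rfl⟩ := hmk b
    refine hb (Ideal.Quotient.eq_zero_iff_mem.mpr (hnd d fun x => ?_))
    simpa using DFunLike.congr_fun h (Ideal.Quotient.mk I x)
  have : Finite (A ⧸ I) := Finite.of_surjective _ hmk
  have : Fintype (A ⧸ I) := Fintype.ofFinite _
  obtain ⟨b, hb⟩ := ((Fintype.bijective_iff_injective_and_card ψ.mulShift).mpr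
    ⟨to_mulShift_inj_of_isPrimitive hprim, card_eq.symm⟩).2 ψ'
  obtain ⟨a, rfl⟩ := hmk b
  exact ⟨a, by ext x; simp [← hb]⟩

end AddChar

lemma Units.inv_sub_one_mem_iff {R : Type*} [CommRing R] {J : Ideal R} {c : Rˣ} :
    ((c⁻¹ : Rˣ) : R) - 1 ∈ J ↔ (c : R) - 1 ∈ J := by
  suffices ∀ c : Rˣ, (c : R) - 1 ∈ J → ((c⁻¹ : Rˣ) : R) - 1 ∈ J from
    ⟨fun h => inv_inv c ▸ this c⁻¹ h, this c⟩
  intro c hc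
  have : ((c⁻¹ : Rˣ) : R) - 1 = -((c⁻¹ : Rˣ) * ((c : R) - 1)) := by
    linear_combination c.inv_mul
  rw [this]
  exact neg_mem (J.mul_mem_left _ hc)

section DualLevel

variable {O : Type} [CommRing O] {π : O} {ℓ : ℕ}

lemma mem_idealImage_iff {k : ℕ} {b : O ⧸ Ideal.span {π} ^ ℓ} :
    b ∈ idealImage O π ℓ k ↔ ∃ y : O, b = Ideal.Quotient.mk _ (π ^ k * y) := by
  rw [idealImage, show Ideal.span {π} ^ k = Ideal.span {π ^ k} from Ideal.span_singleton_pow π k,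
    Ideal.map_span, Set.image_singleton, Ideal.mem_span_singleton']
  constructor
  · rintro ⟨a, rfl⟩
    obtain ⟨y, rfl⟩ := Ideal.Quotient.mk_surjective a
    exact ⟨y, by rw [← map_mul, mul_comm]⟩
  · rintro ⟨y, rfl⟩
    exact ⟨Ideal.Quotient.mk _ y, by rw [← map_mul, mul_comm]⟩

lemma pow_mul_mem_span_pow (π y : O) (k : ℕ) : π ^ k * y ∈ Ideal.span {π} ^ k :=
  Ideal.mul_mem_right y _ (Ideal.pow_mem_pow (Ideal.mem_span_singleton_self π) k)

lemma mk_mem_idealImage {k : ℕ} {z : O} (hz : z ∈ Ideal.span {π} ^ k) :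
    Ideal.Quotient.mk _ z ∈ idealImage O π ℓ k :=
  Ideal.mem_map_of_mem _ hz

variable [IsDomain O] [IsDiscreteValuationRing O]

lemma dvd_pow_of_notMem_span_pow (hπ : Irreducible π) {z : O} {n : ℕ}
    (hz : z ∉ Ideal.span {π} ^ (n + 1)) : z ∣ π ^ n := by
  obtain ⟨m, u, rfl⟩ := IsDiscreteValuationRing.eq_unit_mul_pow_irreducible
    (fun h : z = 0 => hz (h ▸ zero_mem _)) hπ
  rw [Ideal.span_singleton_pow, Ideal.mem_span_singleton] at hz
  have hm : m ≤ n := by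
    by_contra! h
    exact hz ((pow_dvd_pow π h).mul_left _)
  exact Units.mul_left_dvd.mpr (pow_dvd_pow π hm)

lemma mem_span_pow_of_forall_mul_eq_one (hπ : Irreducible π) {r k : ℕ} (hk : k ≤ r)
    {χ : AddChar (O ⧸ Ideal.span {π} ^ ℓ) ℂ} (hχ : ∃ a ∈ idealImage O π ℓ r, χ a ≠ 1) {z : O}
    (hz : ∀ b ∈ idealImage O π ℓ k, χ (Ideal.Quotient.mk _ z * b) = 1) :
    z ∈ Ideal.span {π} ^ (r - k + 1) := by
  by_contra hz'
  obtain ⟨w, hw⟩ := dvd_pow_of_notMem_span_pow hπ hz'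
  obtain ⟨a, ha, hχa⟩ := hχ
  obtain ⟨y, rfl⟩ := mem_idealImage_iff.mp ha
  refine hχa ?_
  have : π ^ r * y = z * (π ^ k * (w * y)) := by
    rw [← Nat.sub_add_cancel hk, pow_add, hw]; ring
  rw [this, map_mul]
  exact hz _ (mem_idealImage_iff.mpr ⟨w * y, rfl⟩)

lemma forall_mk_mul_eq_iff_sub_one_mem (hπ : Irreducible π) {r s : ℕ} (hs : s ≤ r)
    {χ : AddChar (O ⧸ Ideal.span {π} ^ ℓ) ℂ} (hχ : χ ∈ dualLevel O π ℓ r) (z : O) :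
    (∀ b ∈ idealImage O π ℓ s, χ (Ideal.Quotient.mk _ z * b) = χ b) ↔
      z - 1 ∈ Ideal.span {π} ^ (r - s + 1) := by
  have hsplit : ∀ b, χ (Ideal.Quotient.mk _ z * b) = χ b * χ (Ideal.Quotient.mk _ (z - 1) * b) :=
    fun b => by rw [← AddChar.map_add_eq_mul, map_sub, map_one]; ring_nf
  constructor
  · refine fun h => mem_span_pow_of_forall_mul_eq_one hπ hs hχ.2 fun b hb => ?_
    simpa [hsplit, (χ.val_isUnit b).ne_zero] using h b hb
  · intro hz b hb
    obtain ⟨y, rfl⟩ := mem_idealImage_iff.mp hb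
    have hmem : (z - 1) * (π ^ s * y) ∈ Ideal.span {π} ^ (r + 1) := by
      rw [show r + 1 = r - s + 1 + s by omega, pow_add]
      exact Ideal.mul_mem_mul hz (pow_mul_mem_span_pow π y s)
    rw [hsplit, ← map_mul (Ideal.Quotient.mk _) (z - 1), hχ.1 _ (mk_mem_idealImage hmem), mul_one]

lemma isUnit_of_mulShift_ne_one (hπ : Irreducible π) {r : ℕ}
    {χ : AddChar (O ⧸ Ideal.span {π} ^ ℓ) ℂ} (hχ : ∀ a ∈ idealImage O π ℓ (r + 1), χ a = 1)
    {a : O} (ha : ∃ b ∈ idealImage O π ℓ r, χ.mulShift (Ideal.Quotient.mk _ a) b ≠ 1) :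
    IsUnit a := by
  by_contra hunit
  have hπa : a ∈ Ideal.span {π} :=
    hπ.maximalIdeal_eq ▸ (IsLocalRing.mem_maximalIdeal a).mpr hunit
  obtain ⟨b, hb, hne⟩ := ha
  obtain ⟨y, rfl⟩ := mem_idealImage_iff.mp hb
  rw [AddChar.mulShift_apply, ← map_mul] at hne
  refine hne (hχ _ (mk_mem_idealImage ?_))
  rw [pow_succ']
  exact Ideal.mul_mem_mul hπa (pow_mul_mem_span_pow π y r)

lemma exists_eq_mulShift_of_mem_dualLevel [Finite (O ⧸ Ideal.span {π})] (hπ : Irreducible π)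
    {r : ℕ} {χ η : AddChar (O ⧸ Ideal.span {π} ^ ℓ) ℂ} (hχ : χ ∈ dualLevel O π ℓ r)
    (hη : ∀ a ∈ idealImage O π ℓ (r + 1), η a = 1) :
    ∃ a : O, η = χ.mulShift (Ideal.Quotient.mk _ a) := by
  have := Ideal.finite_quotient_pow (Submodule.fg_span_singleton π) ℓ
  have hnondeg : ∀ d, (∀ x, χ (d * x) = 1) → d ∈ idealImage O π ℓ (r + 1) := by
    intro d hd
    obtain ⟨z, rfl⟩ := Ideal.Quotient.mk_surjective d
    simpa using mk_mem_idealImage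
      (mem_span_pow_of_forall_mul_eq_one hπ r.zero_le hχ.2 fun b _ => hd b)
  obtain ⟨a, rfl⟩ := AddChar.exists_eq_mulShift hχ.1 hnondeg hη
  obtain ⟨a, rfl⟩ := Ideal.Quotient.mk_surjective a
  exact ⟨a, rfl⟩

end DualLevel

theorem stmt_5_general (O : Type) [CommRing O] [IsDomain O] [IsDiscreteValuationRing O]
    (π : O) (hπ : Irreducible π) (ℓ : ℕ)
    [Finite (O ⧸ Ideal.span {π})]
    (s r : ℕ) (hs : s ≤ r)
    (χ χ' : AddChar (O ⧸ (Ideal.span {π} ^ ℓ)) ℂ)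
    (hχ : χ ∈ dualLevel O π ℓ r) (hχ' : χ' ∈ dualLevel O π ℓ r) :
    ((∃ c : Oˣ, ((c : O) - 1) ∈ Ideal.span {π} ^ (r - s + 1) ∧
        χ' = χ.mulShift (Ideal.Quotient.mk (Ideal.span {π} ^ ℓ) ((c⁻¹ : Oˣ) : O))) ↔
      (∀ b ∈ idealImage O π ℓ s, χ b = χ' b)) ∧
    ((∀ b ∈ idealImage O π ℓ s, χ b = χ' b) ↔
      (∀ b ∈ idealImage O π ℓ s, χ b * (χ' b)⁻¹ = 1)) := by
  have hmulShift := forall_mk_mul_eq_iff_sub_one_mem hπ hs hχ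
  refine ⟨⟨?_, fun h => ?_⟩,
    forall₂_congr fun b _ => (mul_inv_eq_one₀ (χ'.val_isUnit b).ne_zero).symm⟩
  · rintro ⟨c, hc, rfl⟩ b hb
    exact ((hmulShift _).mpr (Units.inv_sub_one_mem_iff.mpr hc) b hb).symm
  · obtain ⟨a, rfl⟩ := exists_eq_mulShift_of_mem_dualLevel hπ hχ hχ'.1
    have ha := isUnit_of_mulShift_ne_one hπ hχ.1 hχ'.2
    refine ⟨ha.unit⁻¹, Units.inv_sub_one_mem_iff.mp ?_, by rw [inv_inv, ha.unit_spec]⟩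
    rw [inv_inv, ha.unit_spec]
    exact (hmulShift a).mp fun b hb => (h b hb).symm

/-- for `0 ≤ s ≤ r ≤ ℓ-1` and characters `χ, χ'` with
`v̂(χ) = v̂(χ') = r`, the following are equivalent:
(i) `χ'` is in the `𝔬^×_{r-s}`-orbit of `χ` (contragredient action);
(ii) `χ = χ'` on the image of `𝔭^s`;
(iii) `χ·χ'⁻¹` is trivial on the image of `𝔭^s` (i.e. `v̂(χχ'⁻¹) ≤ s-1`). -/
theorem stmt_5 (O : Type) [CommRing O] [IsDomain O] [IsDiscreteValuationRing O]
    (π : O) (hπ : Irreducible π) (q ℓ : ℕ)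
    [Finite (O ⧸ Ideal.span {π})] (hq : Nat.card (O ⧸ Ideal.span {π}) = q)
    (s r : ℕ) (hs : s ≤ r) (hr : r ≤ ℓ - 1) (hℓ : 1 ≤ ℓ)
    (χ χ' : AddChar (O ⧸ (Ideal.span {π} ^ ℓ)) ℂ)
    (hχ : χ ∈ dualLevel O π ℓ r) (hχ' : χ' ∈ dualLevel O π ℓ r) :
    ((∃ c : Oˣ, ((c : O) - 1) ∈ Ideal.span {π} ^ (r - s + 1) ∧
        χ' = χ.mulShift (Ideal.Quotient.mk (Ideal.span {π} ^ ℓ) ((c⁻¹ : Oˣ) : O))) ↔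
      (∀ b ∈ idealImage O π ℓ s, χ b = χ' b)) ∧
    ((∀ b ∈ idealImage O π ℓ s, χ b = χ' b) ↔
      (∀ b ∈ idealImage O π ℓ s, χ b * (χ' b)⁻¹ = 1)) :=
  stmt_5_general O π hπ ℓ s r hs χ χ' hχ hχ'
end

section
/- Let R = 𝔬/𝔭^ℓ with π a generator of 𝔭, and 0 ≤ r ≤ ℓ-1. Then the sum of χ(π^r) over all characters χ ∈ R̂ with v̂(χ) = r equals -q^r. -/
open scoped BigOperators

/-!
Characters of `R` trivial on an additive subgroup `H` are the characters of `R ⧸ H`, so by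
orthogonality their sum at `x` is `|R ⧸ H|` if `x ∈ H` and `0` otherwise. For `H = 𝔭^s R` this is
`q^s` or `0`. The characters with `v̂(χ) = r` are those trivial on `𝔭^(r+1) R` but not on `𝔭^r R`,
and `π^r` lies in `𝔭^r` but not in `𝔭^(r+1)`, so the sum is `0 - q^r`.
-/

namespace AddChar

variable {A M : Type*} [AddCommGroup A] [CommMonoid M]

variable (M) in
def annihilator (H : AddSubgroup A) : Set (AddChar A M) :=
  {χ | ∀ a ∈ H, χ a = 1}

lemma annihilator_antitone : Antitone (annihilator M (A := A)) :=
  fun _ _ hHK _ hχ a ha => hχ a (hHK ha)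

lemma range_compAddMonoidHom_mk (H : AddSubgroup A) :
    Set.range (fun ψ : AddChar (A ⧸ H) M => ψ.compAddMonoidHom (QuotientAddGroup.mk' H)) =
      annihilator M H := by
  ext χ
  constructor
  · rintro ⟨ψ, rfl⟩ a ha
    simp [(QuotientAddGroup.eq_zero_iff a).mpr ha]
  · intro hχ
    refine ⟨toAddMonoidHomEquiv.symm
      (QuotientAddGroup.lift H (toAddMonoidHomEquiv χ) fun a ha => ?_), rfl⟩
    simp [hχ a ha]

open Classical in
lemma finsum_mem_annihilator_apply [Finite A] (H : AddSubgroup A) (x : A) :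
    ∑ᶠ χ ∈ annihilator ℂ H, χ x = if x ∈ H then (Nat.card (A ⧸ H) : ℂ) else 0 := by
  have := Fintype.ofFinite (A ⧸ H)
  rw [← range_compAddMonoidHom_mk,
    finsum_mem_range (compAddMonoidHom_injective_left _ (QuotientAddGroup.mk'_surjective H)),
    finsum_eq_sum_of_fintype]
  simp only [compAddMonoidHom_apply, QuotientAddGroup.mk'_apply, sum_apply_eq_ite,
    QuotientAddGroup.eq_zero_iff, Nat.card_eq_fintype_card]

end AddChar

lemma Ideal.natCard_quotient_map_mk_of_le {R : Type*} [CommRing R] {I J : Ideal R} (h : J ≤ I) :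
    Nat.card ((R ⧸ J) ⧸ I.map (Ideal.Quotient.mk J)) = Nat.card (R ⧸ I) :=
  Nat.card_congr (DoubleQuot.quotQuotEquivQuotOfLE h).toEquiv

lemma Irreducible.natCard_quotient_span_pow {O : Type*} [CommRing O] [IsDomain O]
    [IsDiscreteValuationRing O] {π : O} (hπ : Irreducible π) (s : ℕ) :
    Nat.card (O ⧸ Ideal.span {π} ^ s) = Nat.card (O ⧸ Ideal.span {π}) ^ s := by
  have := (Ideal.span_singleton_prime hπ.ne_zero).mpr hπ.prime
  simpa only [Submodule.cardQuot_apply] using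
    cardQuot_pow_of_prime (Ideal.span_singleton_eq_bot.not.mpr hπ.ne_zero) (i := s)

lemma Irreducible.pow_notMem_span_singleton_pow_succ {O : Type*} [CommRing O] [IsDomain O]
    {π : O} (hπ : Irreducible π) (r : ℕ) : π ^ r ∉ Ideal.span {π} ^ (r + 1) := by
  rw [Ideal.span_singleton_pow, Ideal.mem_span_singleton,
    pow_dvd_pow_iff hπ.ne_zero hπ.not_isUnit]
  omega

lemma dualLevel_eq_sdiff (O : Type) [CommRing O] (π : O) (ℓ r : ℕ) :
    dualLevel O π ℓ r = AddChar.annihilator ℂ (idealImage O π ℓ (r + 1)).toAddSubgroup \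
      AddChar.annihilator ℂ (idealImage O π ℓ r).toAddSubgroup := by
  ext χ
  simp [dualLevel, AddChar.annihilator]

/-- `Σ_{χ ∈ R̂_r} χ(π^r) = -q^r` for `0 ≤ r ≤ ℓ-1`. -/
theorem stmt_7 (O : Type) [CommRing O] [IsDomain O] [IsDiscreteValuationRing O]
    (π : O) (hπ : Irreducible π) (q ℓ : ℕ)
    [Finite (O ⧸ Ideal.span {π})] (hq : Nat.card (O ⧸ Ideal.span {π}) = q)
    (r : ℕ) (hr : r ≤ ℓ - 1) (hℓ : 1 ≤ ℓ) :
    ∑ᶠ χ ∈ dualLevel O π ℓ r, χ (Ideal.Quotient.mk (Ideal.span {π} ^ ℓ) (π ^ r)) =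
      -(q : ℂ) ^ r := by
  classical
  set P := Ideal.span {π}
  have hcard (s : ℕ) : Nat.card (O ⧸ P ^ s) = q ^ s := by
    rw [hπ.natCard_quotient_span_pow, hq]
  have : Finite (O ⧸ P ^ ℓ) :=
    Nat.finite_of_card_ne_zero (by rw [hcard, ← hq]; exact (pow_pos Nat.card_pos ℓ).ne')
  have hsum (s : ℕ) (hs : s ≤ ℓ) :
      ∑ᶠ χ ∈ AddChar.annihilator ℂ (idealImage O π ℓ s).toAddSubgroup,
        χ (Ideal.Quotient.mk (P ^ ℓ) (π ^ r)) = if π ^ r ∈ P ^ s then (q : ℂ) ^ s else 0 := by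
    rw [AddChar.finsum_mem_annihilator_apply, Submodule.mem_toAddSubgroup, idealImage,
      Ideal.mem_quotient_iff_mem (Ideal.pow_le_pow_right hs)]
    congr
    -- `R ⧸ I` is by definition `R ⧸ I.toAddSubgroup`
    exact_mod_cast (Ideal.natCard_quotient_map_mk_of_le (Ideal.pow_le_pow_right hs)).trans
      (hcard s)
  have hsub : AddChar.annihilator ℂ (idealImage O π ℓ r).toAddSubgroup ⊆
      AddChar.annihilator ℂ (idealImage O π ℓ (r + 1)).toAddSubgroup :=
    AddChar.annihilator_antitone <| Submodule.toAddSubgroup_mono <|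
      Ideal.map_mono <| Ideal.pow_le_pow_right r.le_succ
  have hsplit := finsum_mem_add_sdiff (f := fun χ => χ (Ideal.Quotient.mk (P ^ ℓ) (π ^ r)))
    hsub (Set.toFinite _)
  rw [hsum r (by omega), hsum (r + 1) (by omega),
    if_pos (Ideal.pow_mem_pow (Ideal.mem_span_singleton_self π) r),
    if_neg (hπ.pow_notMem_span_singleton_pow_succ r)] at hsplit
  rw [dualLevel_eq_sdiff]
  linear_combination hsplit
end

section
/- Let R = 𝔬/𝔭^ℓ, 0 ≤ s ≤ r ≤ ℓ-1, and χ, χ' ∈ R̂ with v̂(χ) = v̂(χ') = r. Then Σ_{b ∈ R_s} χ(b)·conj(χ'(b)) equals: q^{ℓ-s-1}(q-1) if v̂(χχ'⁻¹) ≤ s-1; −q^{ℓ-s-1} if v̂(χχ'⁻¹) = s; and 0 if v̂(χχ'⁻¹) ≥ s+1. -/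
open scoped BigOperators
open ComplexConjugate

namespace AddChar

section Orthogonality
variable {G R : Type*} [AddCommGroup G] [Finite G] [CommSemiring R]
  (ψ : AddChar G R) (H : AddSubgroup G)

lemma finsum_mem_addSubgroup_eq_card (h : ∀ a ∈ H, ψ a = 1) :
    ∑ᶠ b ∈ (H : Set G), ψ b = Nat.card H := by
  have : Fintype H := Fintype.ofFinite H
  rw [← finsum_set_coe_eq_finsum_mem, finsum_eq_sum_of_fintype, Nat.card_eq_fintype_card]
  simp [h]

lemma finsum_mem_addSubgroup_eq_zero [IsDomain R] (h : ¬∀ a ∈ H, ψ a = 1) :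
    ∑ᶠ b ∈ (H : Set G), ψ b = 0 := by
  classical
  have : Fintype H := Fintype.ofFinite H
  rw [← finsum_set_coe_eq_finsum_mem, finsum_eq_sum_of_fintype]
  refine (ψ.compAddMonoidHom H.subtype).sum_eq_ite.trans (if_neg ?_)
  simpa [AddChar.ne_zero_iff] using h

end Orthogonality

section Conj
variable {G 𝕜 : Type*} [AddCommGroup G] [Finite G] [RCLike 𝕜] (χ χ' : AddChar G 𝕜)

lemma mul_inv_apply_eq_mul_conj (b : G) : (χ * χ'⁻¹) b = χ b * conj (χ' b) := by
  rw [mul_apply, inv_apply', inv_apply_eq_conj]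

lemma finsum_mem_sdiff_mul_conj {H K : AddSubgroup G} (hKH : K ≤ H) :
    ∑ᶠ b ∈ (H : Set G) \ K, χ b * conj (χ' b) =
      ∑ᶠ b ∈ (H : Set G), (χ * χ'⁻¹) b - ∑ᶠ b ∈ (K : Set G), (χ * χ'⁻¹) b := by
  simp only [mul_inv_apply_eq_mul_conj]
  rw [eq_sub_iff_add_eq']
  exact finsum_mem_add_sdiff hKH (Set.toFinite _)

end Conj

lemma mul_inv_apply_eq_one_iff {G K : Type*} [AddCommGroup G] [Field K] (χ χ' : AddChar G K)
    (b : G) : (χ * χ'⁻¹) b = 1 ↔ χ b = χ' b := by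
  rw [mul_apply, inv_apply', mul_inv_eq_one₀ (χ'.val_isUnit b).ne_zero]

end AddChar

theorem Ideal.natCard_map_mk_pow {O : Type*} [CommRing O] [IsDedekindDomain O] {P : Ideal O}
    [P.IsPrime] [Finite (O ⧸ P)] (hP : P ≠ ⊥) {t ℓ : ℕ} (htℓ : t ≤ ℓ) :
    Nat.card (Ideal.map (Ideal.Quotient.mk (P ^ ℓ)) (P ^ t)) = Nat.card (O ⧸ P) ^ (ℓ - t) := by
  have card_pow (n : ℕ) : Nat.card (O ⧸ P ^ n) = Nat.card (O ⧸ P) ^ n := by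
    simpa only [Submodule.cardQuot_apply] using cardQuot_pow_of_prime hP (i := n)
  have h := Submodule.card_eq_card_quotient_mul_card
    (Ideal.map (Ideal.Quotient.mk (P ^ ℓ)) (P ^ t))
  rw [Nat.card_congr (DoubleQuot.quotQuotEquivQuotOfLE (Ideal.pow_le_pow_right htℓ)).toEquiv,
    card_pow, card_pow, ← pow_sub_mul_pow _ htℓ] at h
  exact Nat.eq_of_mul_eq_mul_right (pow_pos Nat.card_pos t) h.symm

lemma natCard_idealImage {O : Type} [CommRing O] [IsDedekindDomain O] {π : O} (hπ : Prime π)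
    [Finite (O ⧸ Ideal.span {π})] {t ℓ : ℕ} (htℓ : t ≤ ℓ) :
    Nat.card (idealImage O π ℓ t) = Nat.card (O ⧸ Ideal.span {π}) ^ (ℓ - t) :=
  have : (Ideal.span {π}).IsPrime := (Ideal.span_singleton_prime hπ.ne_zero).2 hπ
  Ideal.natCard_map_mk_pow (by simpa using hπ.ne_zero) htℓ

theorem stmt_9_general (O : Type) [CommRing O] [IsDomain O] [IsDiscreteValuationRing O]
    (π : O) (hπ : Irreducible π) (q ℓ : ℕ)
    [Finite (O ⧸ Ideal.span {π})] (hq : Nat.card (O ⧸ Ideal.span {π}) = q)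
    (s r : ℕ) (hs : s ≤ r) (hr : r ≤ ℓ - 1) (hℓ : 1 ≤ ℓ)
    (χ χ' : AddChar (O ⧸ (Ideal.span {π} ^ ℓ)) ℂ) :
    ((∀ a ∈ idealImage O π ℓ s, χ a = χ' a) →
      ∑ᶠ b ∈ {b | b ∈ idealImage O π ℓ s ∧ b ∉ idealImage O π ℓ (s + 1)},
          χ b * conj (χ' b) = (q : ℂ) ^ (ℓ - s - 1) * ((q : ℂ) - 1)) ∧
    (((∀ a ∈ idealImage O π ℓ (s + 1), χ a = χ' a) ∧
        ¬(∀ a ∈ idealImage O π ℓ s, χ a = χ' a)) →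
      ∑ᶠ b ∈ {b | b ∈ idealImage O π ℓ s ∧ b ∉ idealImage O π ℓ (s + 1)},
          χ b * conj (χ' b) = -(q : ℂ) ^ (ℓ - s - 1)) ∧
    ((¬(∀ a ∈ idealImage O π ℓ (s + 1), χ a = χ' a)) →
      ∑ᶠ b ∈ {b | b ∈ idealImage O π ℓ s ∧ b ∉ idealImage O π ℓ (s + 1)},
          χ b * conj (χ' b) = 0) := by
  have : Finite (O ⧸ Ideal.span {π} ^ ℓ) :=
    Ideal.finite_quotient_pow (Submodule.fg_span_singleton π) ℓ
  have hs₁ : s + 1 ≤ ℓ := by omega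
  have card_idealImage (t : ℕ) (ht : t ≤ ℓ) :
      Nat.card (idealImage O π ℓ t).toAddSubgroup = q ^ (ℓ - t) :=
    hq ▸ natCard_idealImage hπ.prime ht
  have hle : idealImage O π ℓ (s + 1) ≤ idealImage O π ℓ s :=
    Ideal.map_mono (Ideal.pow_le_pow_right s.le_succ)
  have hsum : ∑ᶠ b ∈ {b | b ∈ idealImage O π ℓ s ∧ b ∉ idealImage O π ℓ (s + 1)},
      χ b * conj (χ' b) = ∑ᶠ b ∈ ((idealImage O π ℓ s).toAddSubgroup : Set _), (χ * χ'⁻¹) b -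
        ∑ᶠ b ∈ ((idealImage O π ℓ (s + 1)).toAddSubgroup : Set _), (χ * χ'⁻¹) b :=
    AddChar.finsum_mem_sdiff_mul_conj χ χ' (Submodule.toAddSubgroup_mono hle)
  have trivial_iff (t : ℕ) : (∀ a ∈ (idealImage O π ℓ t).toAddSubgroup, (χ * χ'⁻¹) a = 1) ↔
      ∀ a ∈ idealImage O π ℓ t, χ a = χ' a := by
    simp only [AddChar.mul_inv_apply_eq_one_iff, Submodule.mem_toAddSubgroup]
  refine ⟨fun h ↦ ?_, fun ⟨h₁, h₀⟩ ↦ ?_, fun h₁ ↦ ?_⟩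
  · rw [hsum, AddChar.finsum_mem_addSubgroup_eq_card _ _ ((trivial_iff s).2 h),
      AddChar.finsum_mem_addSubgroup_eq_card _ _ ((trivial_iff (s + 1)).2 fun a ha ↦ h a (hle ha)),
      card_idealImage s (by omega), card_idealImage (s + 1) hs₁,
      show ℓ - s = ℓ - (s + 1) + 1 by omega]
    push_cast
    ring
  · rw [hsum, AddChar.finsum_mem_addSubgroup_eq_zero _ _ (mt (trivial_iff s).1 h₀),
      AddChar.finsum_mem_addSubgroup_eq_card _ _ ((trivial_iff (s + 1)).2 h₁),
      card_idealImage (s + 1) hs₁, Nat.sub_sub, zero_sub, Nat.cast_pow]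
  · have h₀ : ¬∀ a ∈ idealImage O π ℓ s, χ a = χ' a := fun h ↦ h₁ fun a ha ↦ h a (hle ha)
    rw [hsum, AddChar.finsum_mem_addSubgroup_eq_zero _ _ (mt (trivial_iff s).1 h₀),
      AddChar.finsum_mem_addSubgroup_eq_zero _ _ (mt (trivial_iff (s + 1)).1 h₁), sub_zero]

/-- for `0 ≤ s ≤ r ≤ ℓ-1` and `χ, χ'` with `v̂(χ)=v̂(χ')=r`, the sum
`Σ_{b ∈ R_s} χ(b) conj(χ'(b))` equals `q^{ℓ-s-1}(q-1)` if `v̂(χχ'⁻¹) ≤ s-1`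
(i.e. `χ = χ'` on the image of `𝔭^s`), `-q^{ℓ-s-1}` if `v̂(χχ'⁻¹) = s`, and `0`
if `v̂(χχ'⁻¹) ≥ s+1`. -/
theorem stmt_9 (O : Type) [CommRing O] [IsDomain O] [IsDiscreteValuationRing O]
    (π : O) (hπ : Irreducible π) (q ℓ : ℕ)
    [Finite (O ⧸ Ideal.span {π})] (hq : Nat.card (O ⧸ Ideal.span {π}) = q)
    (s r : ℕ) (hs : s ≤ r) (hr : r ≤ ℓ - 1) (hℓ : 1 ≤ ℓ)
    (χ χ' : AddChar (O ⧸ (Ideal.span {π} ^ ℓ)) ℂ)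
    (hχ : χ ∈ dualLevel O π ℓ r) (hχ' : χ' ∈ dualLevel O π ℓ r) :
    ((∀ a ∈ idealImage O π ℓ s, χ a = χ' a) →
      ∑ᶠ b ∈ {b | b ∈ idealImage O π ℓ s ∧ b ∉ idealImage O π ℓ (s + 1)},
          χ b * conj (χ' b) = (q : ℂ) ^ (ℓ - s - 1) * ((q : ℂ) - 1)) ∧
    (((∀ a ∈ idealImage O π ℓ (s + 1), χ a = χ' a) ∧
        ¬(∀ a ∈ idealImage O π ℓ s, χ a = χ' a)) →
      ∑ᶠ b ∈ {b | b ∈ idealImage O π ℓ s ∧ b ∉ idealImage O π ℓ (s + 1)},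
          χ b * conj (χ' b) = -(q : ℂ) ^ (ℓ - s - 1)) ∧
    ((¬(∀ a ∈ idealImage O π ℓ (s + 1), χ a = χ' a)) →
      ∑ᶠ b ∈ {b | b ∈ idealImage O π ℓ s ∧ b ∉ idealImage O π ℓ (s + 1)},
          χ b * conj (χ' b) = 0) :=
  stmt_9_general O π hπ q ℓ hq s r hs hr hℓ χ χ'
end

section
/- For integers 0 ≤ n ≤ N, variable x and parameter p with 0 < p < 1, the Krawtchouk polynomial K_n(x;p;N) = Σ_{k=0}^n [(-n)_k (-x)_k] / [(-N)_k k! p^k] satisfies the orthogonality relation Σ_{x=0}^N binom(N,x) p^x (1-p)^{N-x} K_m(x;p;N) K_n(x;p;N) = δ_{mn} [(-1)^n n! / (-N)_n] ((1-p)/p)^n. -/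
/-!
With `r = (1 - p) / p`, the generating function of the normalized Krawtchouk polynomials at an
integer point `0 ≤ x ≤ N` factors as
`G_x(t) := ∑ₙ C(N,n) Kₙ(x) tⁿ = (1 - r t)ˣ (1 + t)^(N-x)`.
Averaging the product of two such generating functions against the binomial weights is the
binomial theorem again: `∑ₓ C(N,x) pˣ (1-p)^(N-x) G_x(s) G_x(t) = (1 + r s t)ᴺ`, because
`p (1 - r s)(1 - r t) + (1 - p)(1 + s)(1 + t) = 1 + r s t`. Comparing coefficients of `sᵐ tⁿ`
gives `C(N,m) C(N,n) ∑ₓ C(N,x) pˣ (1-p)^(N-x) Kₘ(x) Kₙ(x) = δₘₙ C(N,n) rⁿ`,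
and `(-N)ₙ = (-1)ⁿ n! C(N,n)`.
-/

open scoped BigOperators

/-- The Pochhammer symbol `(a)ₖ = a(a+1)⋯(a+k-1)` over `ℝ`. -/
noncomputable def poch (a : ℝ) (k : ℕ) : ℝ := (ascPochhammer ℝ k).eval a

/-- The Krawtchouk polynomial
`K_n(x; p; N) = Σ_{k=0}^n (-n)ₖ(-x)ₖ / ((-N)ₖ k! pᵏ)`. -/
noncomputable def kraw (n : ℕ) (x p N : ℝ) : ℝ :=
  ∑ k ∈ Finset.range (n + 1),
    poch (-(n : ℝ)) k * poch (-x) k / (poch (-N) k * (Nat.factorial k) * p ^ k)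

open Finset Polynomial

lemma poch_neg_natCast (N k : ℕ) : poch (-(N : ℝ)) k = (-1) ^ k * k.factorial * N.choose k := by
  rw [poch, ascPochhammer_eval_neg_eq_descPochhammer, descPochhammer_eval_eq_descFactorial,
    Nat.descFactorial_eq_factorial_mul_choose]
  push_cast
  ring

lemma choose_mul_kraw {N n : ℕ} (hn : n ≤ N) (x : ℕ) {p : ℝ} (hp : p ≠ 0) :
    N.choose n * kraw n x p N =
      ∑ j ∈ range (n + 1), (x.choose j * (N - j).choose (n - j) : ℝ) * (-1 / p) ^ j := by
  rw [kraw, mul_sum]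
  refine sum_congr rfl fun j hj => ?_
  have hjn : j ≤ n := Nat.lt_succ_iff.mp (mem_range.mp hj)
  have hNj : (N.choose j : ℝ) ≠ 0 := by exact_mod_cast (Nat.choose_pos (hjn.trans hn)).ne'
  have hchoose : ((N - j).choose (n - j) : ℝ) = N.choose n * n.choose j / N.choose j := by
    rw [eq_div_iff hNj, mul_comm]
    exact_mod_cast (Nat.choose_mul hjn).symm
  simp only [poch_neg_natCast, hchoose, div_pow]
  field_simp

lemma sum_range_choose_mul_pow_mul_pow {R : Type*} [CommSemiring R] {x N : ℕ} (hx : x ≤ N)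
    (a b : R) :
    ∑ j ∈ range (N + 1), x.choose j * a ^ j * b ^ (N - j) = (a + b) ^ x * b ^ (N - x) := by
  have hvanish : ∀ j ∈ range (N + 1), j ∉ range (x + 1) →
      (x.choose j * a ^ j * b ^ (N - j) : R) = 0 := fun j _ hj => by
      rw [Nat.choose_eq_zero_of_lt (by simpa using hj)]
      simp
  rw [← sum_subset (range_subset_range.mpr (by omega)) hvanish, add_pow, sum_mul]
  refine sum_congr rfl fun j hj => ?_
  have hjx : j ≤ x := Nat.lt_succ_iff.mp (mem_range.mp hj)
  rw [show N - j = (x - j) + (N - x) by omega, pow_add]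
  ring

lemma sum_choose_mul_kraw_smul_pow {A : Type*} [CommRing A] [Algebra ℝ A] {N x : ℕ}
    (hx : x ≤ N) {p : ℝ} (hp : p ≠ 0) (t : A) :
    ∑ n ∈ range (N + 1), (N.choose n * kraw n x p N) • t ^ n =
      (1 - ((1 - p) / p) • t) ^ x * (1 + t) ^ (N - x) := by
  calc ∑ n ∈ range (N + 1), (N.choose n * kraw n x p N) • t ^ n
      = ∑ n ∈ range (N + 1), ∑ j ∈ range (n + 1),
          (x.choose j : A) * ((-1 / p) • t) ^ j * ((N - j).choose (n - j) * t ^ (n - j)) := by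
        refine sum_congr rfl fun n hn => ?_
        rw [choose_mul_kraw (Nat.lt_succ_iff.mp (mem_range.mp hn)) x hp, sum_smul]
        refine sum_congr rfl fun j hj => ?_
        rw [← pow_mul_pow_sub t (Nat.lt_succ_iff.mp (mem_range.mp hj))]
        simp only [Algebra.smul_def, mul_pow, map_mul, map_pow, map_natCast]
        ring
    _ = ∑ j ∈ range (N + 1), (x.choose j : A) * ((-1 / p) • t) ^ j * (t + 1) ^ (N - j) := by
        rw [sum_range_diag_flip (N + 1) fun j i =>
          (x.choose j : A) * ((-1 / p) • t) ^ j * ((N - j).choose i * t ^ i)]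
        refine sum_congr rfl fun j hj => ?_
        have hjN := mem_range.mp hj
        rw [add_pow, mul_sum, show N + 1 - j = N - j + 1 by omega]
        refine sum_congr rfl fun i hi => ?_
        ring
    _ = (1 - ((1 - p) / p) • t) ^ x * (1 + t) ^ (N - x) := by
        have hcoef : (-1 / p : ℝ) = -((1 - p) / p) - 1 := by field_simp; ring
        rw [sum_range_choose_mul_pow_mul_pow hx, hcoef, sub_smul, neg_smul, one_smul]
        ring

lemma sum_binomial_smul_pow_mul_pow {A : Type*} [CommRing A] [Algebra ℝ A] (N : ℕ) {p : ℝ}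
    (hp : p ≠ 0) (s t : A) :
    ∑ x ∈ range (N + 1), (N.choose x * p ^ x * (1 - p) ^ (N - x) : ℝ) •
        ((1 - ((1 - p) / p) • s) ^ x * (1 + s) ^ (N - x) *
          ((1 - ((1 - p) / p) • t) ^ x * (1 + t) ^ (N - x))) =
      (1 + ((1 - p) / p) • (s * t)) ^ N := by
  set r := (1 - p) / p
  have hpr : algebraMap ℝ A p * algebraMap ℝ A r = 1 - algebraMap ℝ A p := by
    rw [← map_mul, ← map_one (algebraMap ℝ A), ← map_sub]
    congr 1
    simp only [r]
    field_simp
  have hbase : p • ((1 - r • s) * (1 - r • t)) + (1 - p) • ((1 + s) * (1 + t)) =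
      1 + r • (s * t) := by
    simp only [Algebra.smul_def, map_sub, map_one]
    linear_combination (algebraMap ℝ A r * s * t - s - t - s * t) * hpr
  rw [← hbase, add_pow]
  refine sum_congr rfl fun x _ => ?_
  simp only [Algebra.smul_def, map_mul, map_pow, map_natCast, mul_pow]
  ring

lemma coeff_coeff_sum_sum_smul_C_X_pow_mul_X_pow (N : ℕ) (a : ℕ → ℕ → ℝ) {m n : ℕ} (hm : m ≤ N)
    (hn : n ≤ N) :
    ((∑ i ∈ range (N + 1), ∑ j ∈ range (N + 1),
        a i j • ((C X : ℝ[X][X]) ^ i * X ^ j)).coeff n).coeff m = a m n := by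
  have hterm : ∀ i j, a i j • ((C X : ℝ[X][X]) ^ i * X ^ j) = C (a i j • X ^ i) * X ^ j := by
    intro i j
    rw [← smul_C, C_pow, smul_mul_assoc]
  simp [hterm, finsetSum_coeff, hm, hn]

lemma sum_sum_choose_mul_choose_mul_inner_smul {A : Type*} [CommRing A] [Algebra ℝ A] (N : ℕ)
    {p : ℝ} (hp : p ≠ 0) (s t : A) :
    ∑ m ∈ range (N + 1), ∑ n ∈ range (N + 1),
        (N.choose m * N.choose n * ∑ x ∈ range (N + 1),
          (N.choose x : ℝ) * p ^ x * (1 - p) ^ (N - x) * kraw m x p N * kraw n x p N) •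
          (s ^ m * t ^ n) =
      (1 + ((1 - p) / p) • (s * t)) ^ N := by
  rw [← sum_binomial_smul_pow_mul_pow N hp s t]
  have hgen : ∀ x ∈ range (N + 1),
      (N.choose x * p ^ x * (1 - p) ^ (N - x) : ℝ) •
        ((1 - ((1 - p) / p) • s) ^ x * (1 + s) ^ (N - x) *
          ((1 - ((1 - p) / p) • t) ^ x * (1 + t) ^ (N - x))) =
      ∑ m ∈ range (N + 1), ∑ n ∈ range (N + 1),
        (N.choose x * p ^ x * (1 - p) ^ (N - x) : ℝ) •
          ((N.choose m * kraw m x p N) • s ^ m * ((N.choose n * kraw n x p N) • t ^ n)) := by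
    intro x hx
    have hxN := Nat.lt_succ_iff.mp (mem_range.mp hx)
    rw [← sum_choose_mul_kraw_smul_pow hxN hp s, ← sum_choose_mul_kraw_smul_pow hxN hp t,
      sum_mul_sum]
    simp only [smul_sum]
  rw [sum_congr rfl hgen, eq_comm, sum_comm]
  refine sum_congr rfl fun m _ => ?_
  rw [sum_comm]
  refine sum_congr rfl fun n _ => ?_
  rw [mul_sum, sum_smul]
  refine sum_congr rfl fun x _ => ?_
  simp only [Algebra.smul_def, map_mul]
  ring

lemma one_add_smul_C_X_mul_X_pow (N : ℕ) (r : ℝ) :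
    (1 + r • (C X * X) : ℝ[X][X]) ^ N =
      ∑ i ∈ range (N + 1), ∑ j ∈ range (N + 1),
        (if i = j then (N.choose j * r ^ j : ℝ) else 0) • ((C X : ℝ[X][X]) ^ i * X ^ j) := by
  rw [add_comm, add_pow, sum_comm]
  refine sum_congr rfl fun j hj => ?_
  simp only [ite_smul, zero_smul, sum_ite_eq', hj, if_true, one_pow, mul_one, _root_.smul_pow,
    mul_pow]
  rw [mul_smul, Nat.cast_smul_eq_nsmul, mul_comm, nsmul_eq_mul]

theorem stmt_16_general (N m n : ℕ) (hm : m ≤ N) (hn : n ≤ N) (p : ℝ) (hp0 : 0 < p) :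
    ∑ x ∈ Finset.range (N + 1),
        (N.choose x : ℝ) * p ^ x * (1 - p) ^ (N - x) *
          kraw m (x : ℝ) p (N : ℝ) * kraw n (x : ℝ) p (N : ℝ) =
      if m = n then
        ((-1 : ℝ) ^ n * (Nat.factorial n : ℝ) / poch (-(N : ℝ)) n) * ((1 - p) / p) ^ n
      else 0 := by
  have hcoeff := congrArg (fun f : ℝ[X][X] => (f.coeff n).coeff m)
    (sum_sum_choose_mul_choose_mul_inner_smul N hp0.ne' (C X) X)
  simp only [one_add_smul_C_X_mul_X_pow, coeff_coeff_sum_sum_smul_C_X_pow_mul_X_pow N _ hm hn]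
    at hcoeff
  have hNm : (N.choose m : ℝ) ≠ 0 := by exact_mod_cast (Nat.choose_pos hm).ne'
  have hNn : (N.choose n : ℝ) ≠ 0 := by exact_mod_cast (Nat.choose_pos hn).ne'
  split_ifs at hcoeff ⊢ with hmn
  · subst hmn
    rw [← mul_right_inj' (mul_ne_zero hNm hNm), hcoeff, poch_neg_natCast]
    field_simp
  · simpa [hNm, hNn] using hcoeff

/-- orthogonality of Krawtchouk polynomials with respect to the
binomial distribution:
`Σ_{x=0}^N C(N,x) pˣ (1-p)^{N-x} K_m K_n = δ_{mn} ((-1)ⁿ n!/(-N)ₙ) ((1-p)/p)ⁿ`. -/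
theorem stmt_16 (N m n : ℕ) (hm : m ≤ N) (hn : n ≤ N) (p : ℝ) (hp0 : 0 < p) (hp1 : p < 1) :
    ∑ x ∈ Finset.range (N + 1),
        (N.choose x : ℝ) * p ^ x * (1 - p) ^ (N - x) *
          kraw m (x : ℝ) p (N : ℝ) * kraw n (x : ℝ) p (N : ℝ) =
      if m = n then
        ((-1 : ℝ) ^ n * (Nat.factorial n : ℝ) / poch (-(N : ℝ)) n) * ((1 - p) / p) ^ n
      else 0 :=
  stmt_16_general N m n hm hn p hp0
end

section
/- Let c = (c_k)_{k=1}^N ∈ (𝔬^×)^N, t ≤ N, u ∈ X(ℓ,N) with t ≤ u₀, and define y_0 = #{k ∈ {1,…,t} : c_k ∉ 𝔬^×_0} and y_r = #{k ∈ {1,…,t} : c_k ∈ 𝔬^×_{r-1} − 𝔬^×_r} for 1 ≤ r ≤ ℓ-1. Let 1^t = (1,…,1,0,…,0) ∈ R^N with t ones and π^u ∈ R^N the element with u_s coordinates equal to π^s for each s and zeros elsewhere. Then the element c·1^t − π^u of R^N lies in the orbit O(u₀ − t + y₀, u₁ + y₁, …, u_{ℓ-1} + y_{ℓ-1}), i.e.,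 for each r, the number of coordinates of c·1^t − π^u with valuation r is u_r + y_r (minus t when r = 0). -/
open scoped BigOperators

/-- The set of elements of `R = 𝔬/𝔭^ℓ` of valuation `r`. -/
def level (O : Type) [CommRing O] (π : O) (ℓ r : ℕ) : Set (O ⧸ (Ideal.span {π} ^ ℓ)) :=
  {a | a ∈ idealImage O π ℓ r ∧ a ∉ idealImage O π ℓ (r + 1)}

/-- The element `π^u = (1,…,1,π,…,π,…,π^{ℓ-1},…,π^{ℓ-1},0,…,0) ∈ R^N` with `u_s`
coordinates equal to `π^s` for each `s` and zeros elsewhere.  The coordinate `k`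
(for `k < |u|`) carries `π^{e(k)}` where `e(k)` counts the partial sums of `u`
that are `≤ k`. -/
noncomputable def piu (O : Type) [CommRing O] (π : O) (ℓ N : ℕ) (u : Fin ℓ → ℕ)
    (k : Fin N) : O ⧸ (Ideal.span {π} ^ ℓ) :=
  if (k : ℕ) < ∑ s, u s then
    Ideal.Quotient.mk (Ideal.span {π} ^ ℓ)
      (π ^ ((Finset.univ.filter
        (fun s : Fin ℓ => (∑ s' ∈ Finset.univ.filter (· ≤ s), u s') ≤ (k : ℕ))).card))
  else 0

lemma mem_idealImage_iff_s19 {O : Type} [CommRing O] {π : O} {ℓ r : ℕ} (hrℓ : r ≤ ℓ) (x : O) :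
    Ideal.Quotient.mk (Ideal.span {π} ^ ℓ) x ∈ idealImage O π ℓ r ↔
      x ∈ Ideal.span {π} ^ r := by
  constructor
  · intro h
    obtain ⟨y, hy, hxy⟩ :=
      (Ideal.mem_map_iff_of_surjective _ Ideal.Quotient.mk_surjective).mp h
    have h2 : y - x ∈ Ideal.span {π} ^ ℓ := Ideal.Quotient.eq.mp hxy
    have h3 : y - x ∈ Ideal.span {π} ^ r := Ideal.pow_le_pow_right hrℓ h2
    have := sub_mem hy h3
    simpa using this
  · intro h
    exact Ideal.mem_map_of_mem _ h

lemma pow_mem_span_pow_iff {O : Type} [CommRing O] [IsDomain O] {π : O}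
    (hπ : Irreducible π) {e r : ℕ} :
    π ^ e ∈ Ideal.span {π} ^ r ↔ r ≤ e := by
  rw [Ideal.span_singleton_pow, Ideal.mem_span_singleton]
  exact pow_dvd_pow_iff hπ.ne_zero hπ.not_isUnit

lemma ncard_val_Ico {N : ℕ} (a b : ℕ) (hb : b ≤ N) :
    {k : Fin N | a ≤ (k : ℕ) ∧ (k : ℕ) < b}.ncard = b - a := by
  classical
  rw [Set.ncard_eq_toFinset_card', ← Nat.card_Ico a b]
  rw [← Finset.card_image_of_injective {k : Fin N | a ≤ (k : ℕ) ∧ (k : ℕ) < b}.toFinset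
    Fin.val_injective]
  congr 1
  ext n
  simp only [Finset.mem_image, Set.mem_toFinset, Set.mem_setOf_eq, Finset.mem_Ico]
  constructor
  · rintro ⟨k, ⟨h1, h2⟩, rfl⟩; exact ⟨h1, h2⟩
  · rintro ⟨h1, h2⟩; exact ⟨⟨n, lt_of_lt_of_le h2 hb⟩, ⟨h1, h2⟩, rfl⟩

/-- for `c ∈ (𝔬^×)^N`, the element `c·1^t − π^u ∈ R^N` has exactly
`u_r + y_r` coordinates of valuation `r` (minus `t` when `r = 0`), where
`y_r = #{k ≤ t | c_k ∈ 𝔬^×_{r-1} − 𝔬^×_r}`, i.e. `c_k - 1 ∈ 𝔭^r − 𝔭^{r+1}`. -/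
theorem stmt_19 (O : Type) [CommRing O] [IsDomain O] [IsDiscreteValuationRing O]
    (π : O) (hπ : Irreducible π) (q ℓ N : ℕ)
    [Finite (O ⧸ Ideal.span {π})] (hq : Nat.card (O ⧸ Ideal.span {π}) = q)
    (hℓ : 0 < ℓ) (hN : 1 ≤ N)
    (c : Fin N → Oˣ) (t : ℕ) (htN : t ≤ N)
    (u : Fin ℓ → ℕ) (hu : ∑ s, u s ≤ N) (ht : t ≤ u ⟨0, hℓ⟩)
    (y : Fin ℓ → ℕ)
    (hy : ∀ r : Fin ℓ, y r =
      ({k : Fin N | (k : ℕ) < t ∧ ((c k : O) - 1) ∈ Ideal.span {π} ^ (r : ℕ) ∧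
        ((c k : O) - 1) ∉ Ideal.span {π} ^ ((r : ℕ) + 1)}).ncard) :
    ∀ r : Fin ℓ,
      ({k : Fin N |
          (Ideal.Quotient.mk (Ideal.span {π} ^ ℓ) ((c k : O)) *
              (if (k : ℕ) < t then 1 else 0) - piu O π ℓ N u k) ∈
            level O π ℓ (r : ℕ)}).ncard =
        if r = ⟨0, hℓ⟩ then u r - t + y r else u r + y r := by
  intro r
  classical
  set z0 : Fin ℓ := ⟨0, hℓ⟩ with hz0
  set P : Fin ℓ → ℕ := fun s => ∑ s' ∈ Finset.univ.filter (· ≤ s), u s' with hPdef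
  set S : Fin ℓ → ℕ := fun s => ∑ s' ∈ Finset.Iio s, u s' with hSdef
  -- basic facts about P and S
  have hPapp : ∀ s : Fin ℓ, P s = ∑ s' ∈ Finset.univ.filter (· ≤ s), u s' := fun _ => rfl
  have hSapp : ∀ s : Fin ℓ, S s = ∑ s' ∈ Finset.Iio s, u s' := fun _ => rfl
  have hfilter_eq_Iic : ∀ s : Fin ℓ, Finset.univ.filter (· ≤ s) = Finset.Iic s := by
    intro s; ext x; simp
  have hPS : ∀ s, P s = S s + u s := by
    intro s
    rw [hPapp, hSapp, hfilter_eq_Iic, ← Finset.Iio_insert,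
      Finset.sum_insert (by simp), add_comm]
  have hPmono : ∀ s s' : Fin ℓ, s ≤ s' → P s ≤ P s' := by
    intro s s' hss'
    rw [hPapp, hPapp]
    apply Finset.sum_le_sum_of_subset
    intro x hx
    simp only [Finset.mem_filter, Finset.mem_univ, true_and] at hx ⊢
    exact le_trans hx hss'
  have hP0 : P z0 = u z0 := by
    rw [hPS]
    have : S z0 = 0 := by
      rw [hSapp]
      have : Finset.Iio z0 = ∅ := by
        ext x; simp [hz0, Fin.lt_def]
      simp [this]
    simp [this]
  have hPle : ∀ s, P s ≤ ∑ s', u s' := by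
    intro s
    rw [hPapp]
    apply Finset.sum_le_sum_of_subset
    exact Finset.filter_subset _ _
  have hSleP : ∀ s, S s ≤ P s := fun s => by rw [hPS]; omega
  have htP0 : t ≤ P z0 := by rw [hP0]; exact ht
  have hSP : ∀ s s' : Fin ℓ, s ≤ s' → P s ≤ S s' + u s' := by
    intro s s' h; rw [← hPS]; exact hPmono s s' h
  -- for s < s', P s ≤ S s'
  have hPleS : ∀ s s' : Fin ℓ, s < s' → P s ≤ S s' := by
    intro s s' hss'
    rw [hPapp, hSapp, hfilter_eq_Iic]
    apply Finset.sum_le_sum_of_subset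
    intro x hx
    simp only [Finset.mem_Iic] at hx
    simp only [Finset.mem_Iio]
    exact lt_of_le_of_lt hx hss'
  -- e k
  set e : ℕ → ℕ := fun k =>
    (Finset.univ.filter (fun s : Fin ℓ => P s ≤ k)).card with hedef
  have he_eq : ∀ k : ℕ, S r ≤ k → k < P r → e k = (r : ℕ) := by
    intro k h1 h2
    have : Finset.univ.filter (fun s : Fin ℓ => P s ≤ k) = Finset.Iio r := by
      ext s
      simp only [Finset.mem_filter, Finset.mem_univ, true_and, Finset.mem_Iio]
      constructor
      · intro hs
        by_contra hsr
        push_neg at hsr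
        exact absurd (le_trans (hPmono r s hsr) hs) (not_le.mpr h2)
      · intro hs
        exact le_trans (hPleS s r hs) h1
    rw [hedef]; simp only [this, Fin.card_Iio]
  have he_ge : ∀ k : ℕ, P r ≤ k → (r : ℕ) < e k := by
    intro k h1
    have hsub : Finset.Iic r ⊆ Finset.univ.filter (fun s : Fin ℓ => P s ≤ k) := by
      intro s hs
      simp only [Finset.mem_Iic] at hs
      simp only [Finset.mem_filter, Finset.mem_univ, true_and]
      exact le_trans (hPmono s r hs) h1
    have h2 := Finset.card_le_card hsub
    rw [Fin.card_Iic] at h2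
    have he : e k = (Finset.univ.filter (fun s : Fin ℓ => P s ≤ k)).card := rfl
    omega
  have he_lt : ∀ k : ℕ, k < S r → e k < (r : ℕ) := by
    intro k h1
    have hr0 : (r : ℕ) ≠ 0 := by
      intro h
      have : S r = 0 := by
        rw [hSapp]
        have : Finset.Iio r = ∅ := by
          ext x; simp [Fin.lt_def, h]
        simp [this]
      omega
    obtain ⟨m, hm⟩ := Nat.exists_eq_succ_of_ne_zero hr0
    set pr : Fin ℓ := ⟨m, by omega⟩ with hprdef
    have hSrP : S r = P pr := by
      rw [hSapp, hPapp, hfilter_eq_Iic]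
      congr 1
      ext x
      simp only [Finset.mem_Iio, Finset.mem_Iic, Fin.lt_def, Fin.le_def, hm, hprdef]
      omega
    have hsub : Finset.univ.filter (fun s : Fin ℓ => P s ≤ k) ⊆ Finset.Iio pr := by
      intro s hs
      simp only [Finset.mem_filter, Finset.mem_univ, true_and] at hs
      simp only [Finset.mem_Iio]
      by_contra hsm
      push_neg at hsm
      have := hPmono pr s hsm
      omega
    have h2 := Finset.card_le_card hsub
    rw [Fin.card_Iio] at h2
    have he : e k = (Finset.univ.filter (fun s : Fin ℓ => P s ≤ k)).card := rfl
    simp only [hprdef] at h2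
    omega
  -- bounds
  have hrℓ : (r : ℕ) ≤ ℓ := le_of_lt r.isLt
  have hr1ℓ : (r : ℕ) + 1 ≤ ℓ := r.isLt
  -- describe a k in the three ranges
  set mk := Ideal.Quotient.mk (Ideal.span {π} ^ ℓ) with hmk
  set a : Fin N → O ⧸ (Ideal.span {π} ^ ℓ) := fun k =>
    mk ((c k : O)) * (if (k : ℕ) < t then 1 else 0) - piu O π ℓ N u k with hadef
  -- set equality
  suffices key : ({k : Fin N | a k ∈ level O π ℓ (r : ℕ)}).ncard =
      (if r = ⟨0, hℓ⟩ then u r - t + y r else u r + y r) by exact key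
  have hset : {k : Fin N | a k ∈ level O π ℓ (r : ℕ)} =
      {k : Fin N | (k : ℕ) < t ∧ ((c k : O) - 1) ∈ Ideal.span {π} ^ (r : ℕ) ∧
        ((c k : O) - 1) ∉ Ideal.span {π} ^ ((r : ℕ) + 1)} ∪
      {k : Fin N | max t (S r) ≤ (k : ℕ) ∧ (k : ℕ) < P r} := by
    ext k
    simp only [Set.mem_setOf_eq, Set.mem_union]
    by_cases hkt : (k : ℕ) < t
    · -- a k = mk (c k - 1)
      have hkP0 : (k : ℕ) < P z0 := lt_of_lt_of_le hkt htP0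
      have hkSum : (k : ℕ) < ∑ s, u s := lt_of_lt_of_le hkP0 (hPle z0)
      have he0 : e (k : ℕ) = 0 := by
        rw [hedef]
        have : Finset.univ.filter (fun s : Fin ℓ => P s ≤ (k : ℕ)) = ∅ := by
          ext s
          simp only [Finset.mem_filter, Finset.mem_univ, true_and,
            Finset.notMem_empty, iff_false]
          intro hs
          have : P z0 ≤ P s := hPmono z0 s (by simp [hz0, Fin.le_def])
          omega
        simp [this]
      have hpiu : piu O π ℓ N u k = mk 1 := by
        rw [piu, if_pos hkSum]
        have : (Finset.univ.filter
            (fun s : Fin ℓ => (∑ s' ∈ Finset.univ.filter (· ≤ s), u s') ≤ (k : ℕ))).card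
            = e (k : ℕ) := rfl
        rw [this, he0, pow_zero, hmk]
      have hak : a k = mk ((c k : O) - 1) := by
        simp only [hadef, if_pos hkt, mul_one, hpiu, map_sub, map_one]
      rw [hak]
      constructor
      · intro hl
        obtain ⟨h1, h2⟩ := hl
        left
        exact ⟨hkt, (mem_idealImage_iff_s19 hrℓ _).mp h1,
          fun hc => h2 ((mem_idealImage_iff_s19 hr1ℓ _).mpr hc)⟩
      · intro hl
        rcases hl with ⟨_, h1, h2⟩ | ⟨h1, _⟩
        · exact ⟨(mem_idealImage_iff_s19 hrℓ _).mpr h1,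
            fun hc => h2 ((mem_idealImage_iff_s19 hr1ℓ _).mp hc)⟩
        · omega
    · by_cases hkSum : (k : ℕ) < ∑ s, u s
      · -- a k = - mk (π ^ e k)
        have hpiu : piu O π ℓ N u k = mk (π ^ e (k : ℕ)) := by
          rw [piu, if_pos hkSum]
        have hak : a k = - mk (π ^ e (k : ℕ)) := by
          simp only [hadef, if_neg hkt, mul_zero, hpiu, zero_sub]
        rw [hak]
        have hneg : (- mk (π ^ e (k : ℕ)) ∈ level O π ℓ (r : ℕ)) ↔
            (mk (π ^ e (k : ℕ)) ∈ level O π ℓ (r : ℕ)) := by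
          unfold level
          simp only [Set.mem_setOf_eq]
          rw [Ideal.neg_mem_iff, Ideal.neg_mem_iff]
        rw [hneg]
        have hlev : (mk (π ^ e (k : ℕ)) ∈ level O π ℓ (r : ℕ)) ↔ e (k : ℕ) = (r : ℕ) := by
          unfold level
          simp only [Set.mem_setOf_eq]
          rw [hmk, mem_idealImage_iff_s19 hrℓ, mem_idealImage_iff_s19 hr1ℓ,
            pow_mem_span_pow_iff hπ, pow_mem_span_pow_iff hπ]
          omega
        rw [hlev]
        constructor
        · intro hek
          right
          constructor
          · have h1 : ¬ ((k : ℕ) < S r) := fun hc => by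
              have := he_lt (k : ℕ) hc; omega
            omega
          · by_contra hc
            push_neg at hc
            have := he_ge (k : ℕ) hc
            omega
        · intro hl
          rcases hl with ⟨h1, _⟩ | ⟨h1, h2⟩
          · omega
          · exact he_eq (k : ℕ) (le_trans (le_max_right _ _) h1) h2
      · -- a k = 0
        have hpiu : piu O π ℓ N u k = 0 := by rw [piu, if_neg hkSum]
        have hak : a k = 0 := by
          simp only [hadef, if_neg hkt, mul_zero, hpiu, sub_zero]
        rw [hak]
        constructor
        · intro hl
          exact absurd (Submodule.zero_mem _) hl.2
        · intro hl
          rcases hl with ⟨h1, _⟩ | ⟨_, h2⟩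
          · omega
          · have := hPle r; omega
  -- compute the cardinality
  have hdisj : Disjoint
      {k : Fin N | (k : ℕ) < t ∧ ((c k : O) - 1) ∈ Ideal.span {π} ^ (r : ℕ) ∧
        ((c k : O) - 1) ∉ Ideal.span {π} ^ ((r : ℕ) + 1)}
      {k : Fin N | max t (S r) ≤ (k : ℕ) ∧ (k : ℕ) < P r} := by
    rw [Set.disjoint_left]
    intro k hk1 hk2
    simp only [Set.mem_setOf_eq] at hk1 hk2
    have := le_trans (le_max_left t (S r)) hk2.1
    omega
  rw [hset, Set.ncard_union_eq hdisj (Set.toFinite _) (Set.toFinite _)]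
  rw [← hy r, ncard_val_Ico _ _ (le_trans (hPle r) hu)]
  by_cases hr0 : r = z0
  · rw [if_pos hr0, hr0]
    have hmax : max t (S z0) = t := by
      have : S z0 = 0 := by
        rw [hSapp]
        have : Finset.Iio z0 = ∅ := by ext x; simp [hz0, Fin.lt_def]
        simp [this]
      omega
    rw [hmax, hP0]
    omega
  · rw [if_neg hr0]
    have htSr : t ≤ S r := by
      have hz0r : z0 < r := by
        rcases lt_or_eq_of_le (by simp [hz0, Fin.le_def] : z0 ≤ r) with h | h
        · exact h
        · exact absurd h.symm hr0
      have : P z0 ≤ S r := hPleS z0 r hz0r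
      omega
    have hmax : max t (S r) = S r := by omega
    rw [hmax]
    have := hPS r
    omega
end
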